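/- Under the second-order condition on U with η ∈ (0,1] and τ > 0, lim_{t→∞} U(t)/V*(t) = 1, where V*(t) = U(1/(1−e^{−1/t})) + 1/2. -/

import Mathlib

open Filter Real

lemma exp_half_le_two : Real.exp (1/2) ≤ 2 := by
  have h : Real.exp (1/2) * Real.exp (1/2) = Real.exp 1 := by
    rw [← Real.exp_add]; norm_num
  nlinarith [Real.exp_one_lt_d9, Real.exp_pos (1/2)]

set_option maxHeartbeats 2000000 in
lemma tendsto_W (U qstar : ℝ → ℝ) (η τ : ℝ) (hτ : 0 < τ)
    (hUpos : ∀ t > (0:ℝ), 0 < U t)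
    (hRVU : ∀ x > (0:ℝ), Tendsto (fun t => U (t*x) / U t) atTop (nhds (x ^ η)))
    (h2nd : ∀ x > (0:ℝ), Tendsto (fun t => (U (t*x) / U t - x ^ η) / qstar t)
      atTop (nhds (x ^ η * (x ^ (-τ) - 1) / τ)))
    (hq0 : Tendsto qstar atTop (nhds 0))
    (hRVq : ∀ x > (0:ℝ), Tendsto (fun t => |qstar (t*x)| / |qstar t|) atTop (nhds (x ^ (-τ)))) :
    ∃ L > 0, Tendsto (fun t => U t * t ^ (-η)) atTop (nhds L) := by
  set W : ℝ → ℝ := fun t => U t * t ^ (-η) with hW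
  -- constants
  have h2τpos : (0:ℝ) < (2:ℝ) ^ (-τ) := Real.rpow_pos_of_pos two_pos _
  have h2τlt : (2:ℝ) ^ (-τ) < 1 :=
    Real.rpow_lt_one_of_one_lt_of_neg one_lt_two (neg_neg_iff_pos.mpr hτ)
  set r : ℝ := ((2:ℝ) ^ (-τ) + 1) / 2 with hr
  have hr0 : 0 < r := by positivity
  have hr1 : r < 1 := by rw [hr]; linarith
  have hτr : (2:ℝ) ^ (-τ) < r := by rw [hr]; linarith
  set A : ℝ := (2:ℝ) ^ η * ((2:ℝ) ^ (-τ) - 1) / τ with hA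
  set C : ℝ := |A| + 1 with hC
  have hC0 : 0 < C := by positivity
  have h2η : (0:ℝ) < (2:ℝ) ^ (-η) := Real.rpow_pos_of_pos two_pos _
  set C' : ℝ := C * (2:ℝ) ^ (-η) with hC'
  have hC'0 : 0 < C' := by positivity
  -- eventual properties
  have E1 : ∀ᶠ t in atTop, |qstar (t*2)| / |qstar t| < r :=
    (hRVq 2 two_pos).eventually_lt_const hτr
  have E1' : ∀ᶠ t in atTop, 0 < |qstar (t*2)| / |qstar t| :=
    (hRVq 2 two_pos).eventually_const_lt h2τpos
  have E2 : ∀ᶠ t in atTop, |(U (t*2) / U t - (2:ℝ) ^ η) / qstar t - A| < 1 := by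
    have := h2nd 2 two_pos
    rw [Metric.tendsto_nhds] at this
    simpa [Real.dist_eq, hA] using this 1 one_pos
  have E3 : ∀ᶠ t in atTop, |qstar t| < (1 - r) / (8 * C') := by
    have habs : Tendsto (fun t => |qstar t|) atTop (nhds 0) := by
      simpa using hq0.abs
    exact habs.eventually_lt_const (div_pos (by linarith) (by positivity))
  have E4 : ∀ᶠ (t:ℝ) in atTop, (1:ℝ) ≤ t := eventually_ge_atTop 1
  obtain ⟨T, hT⟩ := eventually_atTop.mp (((E1.and E1').and (E2.and E3)).and E4)
  -- pointwise consequences for t ≥ T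
  have hT1 : (1:ℝ) ≤ T := by
    have := (hT T le_rfl).2; linarith [(hT T le_rfl).2]
  have hT0 : (0:ℝ) < T := by linarith
  have ht0 : ∀ t, T ≤ t → 0 < t := fun t ht => lt_of_lt_of_le hT0 ht
  have hqne : ∀ t, T ≤ t → qstar t ≠ 0 := by
    intro t ht h0
    have := ((hT t ht).1.1).2
    rw [h0] at this; simp at this
  have hstep : ∀ t, T ≤ t → |qstar (t*2)| ≤ r * |qstar t| := by
    intro t ht
    have hq := abs_pos.mpr (hqne t ht)
    have := ((hT t ht).1.1).1
    exact le_of_lt ((div_lt_iff₀ hq).mp this)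
  have hd8 : ∀ t, T ≤ t → C' * |qstar t| ≤ (1 - r) / 8 := by
    intro t ht
    have h3 := (hT t ht).1.2.2
    have : C' * |qstar t| ≤ C' * ((1 - r) / (8 * C')) :=
      mul_le_mul_of_nonneg_left h3.le hC'0.le
    calc C' * |qstar t| ≤ C' * ((1 - r) / (8 * C')) := this
      _ = (1 - r) / 8 := by field_simp
  have hWpos : ∀ t, T ≤ t → 0 < W t := by
    intro t ht
    exact mul_pos (hUpos t (ht0 t ht)) (Real.rpow_pos_of_pos (ht0 t ht) _)
  have hUbound : ∀ t, T ≤ t → |U (t*2) / U t - (2:ℝ) ^ η| ≤ C * |qstar t| := by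
    intro t ht
    have h2 := (hT t ht).1.2.1
    have hx : |(U (t*2) / U t - (2:ℝ) ^ η) / qstar t| ≤ C := by
      have := abs_sub_abs_le_abs_sub ((U (t*2) / U t - (2:ℝ) ^ η) / qstar t) A
      rw [hC]; linarith [le_of_lt (lt_of_le_of_lt this (by linarith [h2] : |(U (t*2) / U t - (2:ℝ) ^ η) / qstar t - A| < 1))]
    have hq := abs_pos.mpr (hqne t ht)
    rw [abs_div] at hx
    calc |U (t*2) / U t - (2:ℝ) ^ η| = |U (t*2) / U t - (2:ℝ) ^ η| / |qstar t| * |qstar t| := by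
          field_simp
      _ ≤ C * |qstar t| := mul_le_mul_of_nonneg_right hx (abs_nonneg _)
  have hWstep : ∀ t, T ≤ t → |W (t*2) - W t| ≤ W t * (C' * |qstar t|) := by
    intro t ht
    have htpos := ht0 t ht
    have hUt := hUpos t htpos
    have hkey : W (t*2) - W t = (U (t*2) / U t - (2:ℝ) ^ η) * ((2:ℝ) ^ (-η) * W t) := by
      have h1 : ((t*2:ℝ)) ^ (-η) = t ^ (-η) * (2:ℝ) ^ (-η) :=
        Real.mul_rpow htpos.le (by norm_num)
      have h2 : (2:ℝ) ^ η * (2:ℝ) ^ (-η) = 1 := by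
        rw [← Real.rpow_add two_pos]; simp
      have h3 : U (t*2) / U t * U t = U (t*2) := div_mul_cancel₀ _ hUt.ne'
      simp only [hW]
      rw [h1]
      linear_combination (-((2:ℝ) ^ (-η)) * t ^ (-η)) * h3 + (U t * t ^ (-η)) * h2
    rw [hkey, abs_mul, abs_of_pos (mul_pos h2η (hWpos t ht))]
    calc |U (t*2) / U t - (2:ℝ) ^ η| * ((2:ℝ) ^ (-η) * W t)
        ≤ C * |qstar t| * ((2:ℝ) ^ (-η) * W t) :=
          mul_le_mul_of_nonneg_right (hUbound t ht)
            (le_of_lt (mul_pos h2η (hWpos t ht)))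
      _ = W t * (C' * |qstar t|) := by rw [hC']; ring
  -- the dyadic sequence: for each t ≥ T it converges, with quantitative bound
  have haux : ∀ t, T ≤ t → ∃ ℓ, Tendsto (fun k : ℕ => W (t * 2 ^ k)) atTop (nhds ℓ) ∧
      |W t - ℓ| ≤ 2 * W t * (C' * |qstar t|) / (1 - r) := by
    intro t ht
    have htpos := ht0 t ht
    have hmem : ∀ k : ℕ, T ≤ t * 2 ^ k := by
      intro k
      calc T ≤ t := ht
        _ ≤ t * 2 ^ k := le_mul_of_one_le_right htpos.le (one_le_pow₀ one_le_two)
    set d : ℝ := C' * |qstar t| with hdd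
    have hd0 : 0 ≤ d := by positivity
    have hdle : d ≤ (1 - r) / 8 := hd8 t ht
    have hqk : ∀ k : ℕ, |qstar (t * 2 ^ k)| ≤ r ^ k * |qstar t| := by
      intro k
      induction k with
      | zero => simp
      | succ k ih =>
        have h1 : t * 2 ^ (k+1) = (t * 2 ^ k) * 2 := by ring
        rw [h1, pow_succ]
        calc |qstar (t * 2 ^ k * 2)| ≤ r * |qstar (t * 2 ^ k)| := hstep _ (hmem k)
          _ ≤ r * (r ^ k * |qstar t|) := mul_le_mul_of_nonneg_left ih hr0.le
          _ = r ^ k * r * |qstar t| := by ring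
    have hWk : ∀ k : ℕ, |W (t * 2 ^ (k+1)) - W (t * 2 ^ k)| ≤ W (t * 2 ^ k) * (d * r ^ k) := by
      intro k
      have h1 : t * 2 ^ (k+1) = (t * 2 ^ k) * 2 := by ring
      rw [h1]
      calc |W (t * 2 ^ k * 2) - W (t * 2 ^ k)|
          ≤ W (t * 2 ^ k) * (C' * |qstar (t * 2 ^ k)|) := hWstep _ (hmem k)
        _ ≤ W (t * 2 ^ k) * (C' * (r ^ k * |qstar t|)) := by
            apply mul_le_mul_of_nonneg_left _ (hWpos _ (hmem k)).le
            exact mul_le_mul_of_nonneg_left (hqk k) hC'0.le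
        _ = W (t * 2 ^ k) * (d * r ^ k) := by rw [hdd]; ring
    have hbound : ∀ k : ℕ, W (t * 2 ^ k) ≤ 2 * W t := by
      have hgeom : ∀ k : ℕ, W (t * 2 ^ k) ≤
          W t * Real.exp (d * ∑ j ∈ Finset.range k, r ^ j) := by
        intro k
        induction k with
        | zero => simp
        | succ k ih =>
          have h1 : W (t * 2 ^ (k+1)) ≤ W (t * 2 ^ k) * (1 + d * r ^ k) := by
            have := (abs_le.mp (hWk k)).2
            have hWp := (hWpos _ (hmem k)).le
            nlinarith
          have h2 : (1 : ℝ) + d * r ^ k ≤ Real.exp (d * r ^ k) := by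
            have := Real.add_one_le_exp (d * r ^ k); linarith
          calc W (t * 2 ^ (k+1)) ≤ W (t * 2 ^ k) * (1 + d * r ^ k) := h1
            _ ≤ (W t * Real.exp (d * ∑ j ∈ Finset.range k, r ^ j)) * (1 + d * r ^ k) := by
                apply mul_le_mul_of_nonneg_right ih
                nlinarith [pow_nonneg hr0.le k]
            _ ≤ (W t * Real.exp (d * ∑ j ∈ Finset.range k, r ^ j)) * Real.exp (d * r ^ k) := by
                apply mul_le_mul_of_nonneg_left h2
                exact mul_nonneg (hWpos t ht).le (Real.exp_pos _).le
            _ = W t * Real.exp (d * ∑ j ∈ Finset.range (k+1), r ^ j) := by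
                rw [Finset.sum_range_succ, mul_add, Real.exp_add]; ring
      intro k
      have hsum : ∑ j ∈ Finset.range k, r ^ j ≤ (1 - r)⁻¹ := by
        rw [geom_sum_eq hr1.ne]
        have h1 : (r ^ k - 1) / (r - 1) = (1 - r ^ k) / (1 - r) := by
          rw [div_eq_div_iff (by linarith) (by linarith)]; ring
        have h2 : (1 - r ^ k) / (1 - r) ≤ 1 / (1 - r) := by
          gcongr
          · nlinarith [pow_nonneg hr0.le k]
        rw [h1, ← one_div]; exact h2
      have hexp : Real.exp (d * ∑ j ∈ Finset.range k, r ^ j) ≤ 2 := by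
        calc Real.exp (d * ∑ j ∈ Finset.range k, r ^ j) ≤ Real.exp (1/2) := by
              apply Real.exp_le_exp.mpr
              have hs0 : (0:ℝ) ≤ ∑ j ∈ Finset.range k, r ^ j :=
                Finset.sum_nonneg fun j _ => pow_nonneg hr0.le j
              have h3 : d * ∑ j ∈ Finset.range k, r ^ j ≤ ((1 - r)/8) * (1 - r)⁻¹ := by
                apply mul_le_mul hdle hsum hs0 (by linarith)
              have h4 : ((1 - r)/8) * (1 - r)⁻¹ = 1/8 := by
                field_simp
                exact div_self (ne_of_gt (by nlinarith))
              linarith [h3, h4.le]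
          _ ≤ 2 := exp_half_le_two
      calc W (t * 2 ^ k) ≤ W t * Real.exp (d * ∑ j ∈ Finset.range k, r ^ j) := hgeom k
        _ ≤ W t * 2 := mul_le_mul_of_nonneg_left hexp (hWpos t ht).le
        _ = 2 * W t := by ring
    have hdist : ∀ k : ℕ, dist (W (t * 2 ^ k)) (W (t * 2 ^ (k+1))) ≤ (2 * W t * d) * r ^ k := by
      intro k
      rw [Real.dist_eq, abs_sub_comm]
      calc |W (t * 2 ^ (k+1)) - W (t * 2 ^ k)| ≤ W (t * 2 ^ k) * (d * r ^ k) := hWk k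
        _ ≤ (2 * W t) * (d * r ^ k) := by
            apply mul_le_mul_of_nonneg_right (hbound k)
            positivity
        _ = (2 * W t * d) * r ^ k := by ring
    obtain ⟨ℓ, hℓ⟩ := cauchySeq_tendsto_of_complete
      (cauchySeq_of_le_geometric r (2 * W t * d) hr1 hdist)
    refine ⟨ℓ, hℓ, ?_⟩
    have := dist_le_of_le_geometric_of_tendsto₀ r (2 * W t * d) hr1 hdist hℓ
    simpa [Real.dist_eq, mul_one] using this
  -- limit is independent of t
  obtain ⟨L, hLtend, hLdist⟩ := haux T le_rfl
  have hTk : Tendsto (fun k : ℕ => T * 2 ^ k) atTop atTop :=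
    Tendsto.const_mul_atTop hT0 (tendsto_pow_atTop_atTop_of_one_lt one_lt_two)
  have hsame : ∀ t, T ≤ t → Tendsto (fun k : ℕ => W (t * 2 ^ k)) atTop (nhds L) := by
    intro t ht
    have htpos := ht0 t ht
    set x : ℝ := t / T with hx
    have hxpos : 0 < x := div_pos htpos hT0
    have hkey : ∀ k : ℕ, W (t * 2 ^ k) =
        (U ((T * 2 ^ k) * x) / U (T * 2 ^ k) * x ^ (-η)) * W (T * 2 ^ k) := by
      intro k
      have hTk0 : (0:ℝ) < T * 2 ^ k := by positivity
      have hUT := hUpos _ hTk0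
      have h1 : (T * 2 ^ k) * x = t * 2 ^ k := by
        rw [hx]; field_simp
      have h2 : ((t * 2 ^ k : ℝ)) ^ (-η) = x ^ (-η) * ((T * 2 ^ k : ℝ)) ^ (-η) := by
        rw [← Real.mul_rpow hxpos.le hTk0.le]
        congr 1
        rw [hx]; field_simp
      rw [h1]
      simp only [hW]
      rw [h2]
      field_simp
      rw [mul_comm ((2:ℝ) ^ k) T, mul_div_cancel_right₀ _ hUT.ne']
    have hlim : Tendsto (fun k : ℕ =>
        (U ((T * 2 ^ k) * x) / U (T * 2 ^ k) * x ^ (-η)) * W (T * 2 ^ k)) atTop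
        (nhds ((x ^ η * x ^ (-η)) * L)) := by
      exact (((hRVU x hxpos).comp hTk).mul_const _).mul hLtend
    have hone : (x ^ η * x ^ (-η) : ℝ) = 1 := by
      rw [← Real.rpow_add hxpos]; simp
    rw [hone, one_mul] at hlim
    exact (Tendsto.congr (fun k => (hkey k).symm) hlim)
  -- positivity of L and quantitative closeness
  have hclose : ∀ t, T ≤ t → |W t - L| ≤ W t / 4 := by
    intro t ht
    obtain ⟨ℓ, hℓ, hℓd⟩ := haux t ht
    have hℓL : ℓ = L := tendsto_nhds_unique hℓ (hsame t ht)
    rw [hℓL] at hℓd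
    have h1 : 2 * W t * (C' * |qstar t|) / (1 - r) ≤ W t / 4 := by
      have hd := hd8 t ht
      have hWp := hWpos t ht
      rw [div_le_div_iff₀ (by linarith) (by norm_num)]
      nlinarith [abs_nonneg (qstar t), hC'0.le, hWp,
        mul_le_mul_of_nonneg_left hd hWp.le]
    linarith
  have hL0 : 0 < L := by
    have h1 := hclose T le_rfl
    have h2 := hWpos T le_rfl
    have := (abs_le.mp h1).2
    linarith
  refine ⟨L, hL0, ?_⟩
  rw [tendsto_iff_dist_tendsto_zero]
  apply squeeze_zero' (Eventually.of_forall fun t => dist_nonneg)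
    (g := fun t => (4 * L * C' / (1 - r)) * |qstar t|) ?_ ?_
  · rw [eventually_atTop]
    refine ⟨T, fun t ht => ?_⟩
    obtain ⟨ℓ, hℓ, hℓd⟩ := haux t ht
    have hℓL : ℓ = L := tendsto_nhds_unique hℓ (hsame t ht)
    rw [hℓL] at hℓd
    have hWle : W t ≤ 2 * L := by
      have h1 := hclose t ht
      have := (abs_le.mp h1).2
      linarith
    rw [Real.dist_eq]
    calc |W t - L| ≤ 2 * W t * (C' * |qstar t|) / (1 - r) := hℓd
      _ ≤ 2 * (2 * L) * (C' * |qstar t|) / (1 - r) := by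
          apply div_le_div_of_nonneg_right ?_ (by linarith)
          have hx : (0:ℝ) ≤ C' * |qstar t| := by positivity
          nlinarith [mul_le_mul_of_nonneg_right hWle hx]
      _ = (4 * L * C' / (1 - r)) * |qstar t| := by ring
  · have habs : Tendsto (fun t => |qstar t|) atTop (nhds 0) := by simpa using hq0.abs
    have := habs.const_mul (4 * L * C' / (1 - r))
    simpa using this

/-- Under the second-order condition, U(t)/V*(t) → 1 where
V*(t) = U(1/(1−e^{−1/t})) + 1/2. -/
theorem stmt_14 (U qstar : ℝ → ℝ) (η τ : ℝ) (hη0 : 0 < η) (hη1 : η ≤ 1) (hτ : 0 < τ)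
    (hUpos : ∀ t > (0:ℝ), 0 < U t) (hU : Tendsto U atTop atTop)
    (hRVU : ∀ x > (0:ℝ), Tendsto (fun t => U (t*x) / U t) atTop (nhds (x ^ η)))
    (h2nd : ∀ x > (0:ℝ), Tendsto (fun t => (U (t*x) / U t - x ^ η) / qstar t)
      atTop (nhds (x ^ η * (x ^ (-τ) - 1) / τ)))
    (hq0 : Tendsto qstar atTop (nhds 0))
    (hRVq : ∀ x > (0:ℝ), Tendsto (fun t => |qstar (t*x)| / |qstar t|) atTop (nhds (x ^ (-τ)))) :
    Tendsto (fun t => U t / (U (1 / (1 - Real.exp (-(1/t)))) + 1/2)) atTop (nhds 1) := by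
  obtain ⟨L, hL0, hWt⟩ := tendsto_W U qstar η τ hτ hUpos hRVU h2nd hq0 hRVq
  set W : ℝ → ℝ := fun t => U t * t ^ (-η) with hWdef
  set g : ℝ → ℝ := fun t => 1 / (1 - Real.exp (-(1/t))) with hgdef
  -- the slope limit : t * (1 - exp(-1/t)) → 1
  have hd : HasDerivAt (fun u : ℝ => 1 - Real.exp (-u)) 1 0 := by
    have h1 : HasDerivAt (fun u : ℝ => -u) (-1) 0 := (hasDerivAt_id 0).neg
    have h2 := (Real.hasDerivAt_exp (-0)).comp 0 h1
    have h3 := h2.const_sub 1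
    simpa using h3
  rw [hasDerivAt_iff_tendsto_slope] at hd
  have hslope : Tendsto (fun u : ℝ => (1 - Real.exp (-u)) / u)
      (nhdsWithin 0 (Set.Ioi 0)) (nhds 1) := by
    have hmono : nhdsWithin (0:ℝ) (Set.Ioi 0) ≤ nhdsWithin 0 {(0:ℝ)}ᶜ :=
      nhdsWithin_mono 0 (fun x hx => ne_of_gt hx)
    have := hd.mono_left hmono
    apply this.congr
    intro u
    simp [slope_def_field]
  have h1t : Tendsto (fun t : ℝ => 1/t) atTop (nhdsWithin 0 (Set.Ioi 0)) := by
    rw [tendsto_nhdsWithin_iff]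
    constructor
    · simpa [one_div] using (tendsto_inv_atTop_zero (𝕜 := ℝ))
    · filter_upwards [eventually_gt_atTop (0:ℝ)] with t ht
      exact Set.mem_Ioi.mpr (by positivity)
  have F1 : Tendsto (fun t : ℝ => t * (1 - Real.exp (-(1/t)))) atTop (nhds 1) := by
    have := hslope.comp h1t
    apply this.congr'
    filter_upwards [eventually_gt_atTop (0:ℝ)] with t ht
    simp only [Function.comp_apply]
    rw [one_div t, div_inv_eq_mul]
    ring
  have F2' : Tendsto (fun t => t / g t) atTop (nhds 1) := by
    apply F1.congr
    intro t
    rw [hgdef]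
    simp only []
    rw [one_div (1 - Real.exp (-(1/t))), div_inv_eq_mul]
  have F2'' : Tendsto (fun t => g t / t) atTop (nhds 1) := by
    have := (F1.inv₀ one_ne_zero)
    simp only [inv_one] at this
    apply this.congr
    intro t
    rw [hgdef]
    simp only []
    rw [mul_inv, one_div, div_eq_mul_inv]
    ring
  have F3 : Tendsto g atTop atTop := by
    have h := Tendsto.pos_mul_atTop one_pos F2'' tendsto_id
    apply h.congr'
    filter_upwards [eventually_gt_atTop (0:ℝ)] with t ht
    exact div_mul_cancel₀ _ (ne_of_gt ht)
  have hWg : Tendsto (fun t => W (g t)) atTop (nhds L) := hWt.comp F3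
  have hUg : Tendsto (fun t => U (g t)) atTop atTop := hU.comp F3
  have hfrac : Tendsto (fun y : ℝ => y / (y + 1/2)) atTop (nhds 1) := by
    have hden : Tendsto (fun y : ℝ => y + 1/2) atTop atTop :=
      tendsto_atTop_add_const_right _ _ tendsto_id
    have h0 : Tendsto (fun y : ℝ => (1/2 : ℝ) / (y + 1/2)) atTop (nhds 0) :=
      Tendsto.div_atTop tendsto_const_nhds hden
    have h1 : Tendsto (fun y : ℝ => 1 - (1/2 : ℝ) / (y + 1/2)) atTop (nhds 1) := by
      simpa using (tendsto_const_nhds (x := (1:ℝ)) (f := atTop)).sub h0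
    apply h1.congr'
    filter_upwards [eventually_ge_atTop (1:ℝ)] with y hy
    have : y + 1/2 ≠ 0 := by linarith
    field_simp
    ring
  have hpow : Tendsto (fun t => (t / g t) ^ η) atTop (nhds 1) := by
    have hc : ContinuousAt (fun x : ℝ => x ^ η) 1 :=
      Real.continuousAt_rpow_const 1 η (Or.inl one_ne_zero)
    have := hc.tendsto.comp F2'
    simpa [Real.one_rpow, Function.comp_def] using this
  have hmain : Tendsto (fun t => (W t / W (g t)) * ((t / g t) ^ η) *
      (U (g t) / (U (g t) + 1/2))) atTop (nhds 1) := by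
    have h1 : Tendsto (fun t => W t / W (g t)) atTop (nhds (L / L)) :=
      hWt.div hWg (ne_of_gt hL0)
    rw [div_self (ne_of_gt hL0)] at h1
    have h2 := (h1.mul hpow).mul (hfrac.comp hUg)
    simpa using h2
  apply hmain.congr'
  filter_upwards [eventually_gt_atTop (0:ℝ), F3.eventually_ge_atTop 1] with t ht hgt
  have hg0 : (0:ℝ) < g t := by linarith
  have hUgt : 0 < U (g t) := hUpos _ hg0
  have ha : (0:ℝ) < t ^ η := Real.rpow_pos_of_pos ht _
  have hb : (0:ℝ) < (g t) ^ η := Real.rpow_pos_of_pos hg0 _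
  have key : ∀ u v p q c : ℝ, 0 < v → 0 < p → 0 < q → 0 < c →
      (u * p⁻¹) / (v * q⁻¹) * (p / q) * (v / c) = u / c := by
    intro u v p q c hv hp hq hc
    field_simp
  rw [hWdef]
  simp only []
  rw [Real.rpow_neg ht.le, Real.rpow_neg hg0.le, Real.div_rpow ht.le hg0.le]
  exact key (U t) (U (g t)) (t ^ η) ((g t) ^ η) (U (g t) + 1/2) hUgt ha hb
    (by linarith)
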